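/- arXiv:1703.04365 — 6 statements merged into one kernel-verified Lean document; each statement's English description precedes it below -/
import Mathlib

section
/- Let G be a subgroup of the signed permutation group {±1}^n ⋊ S_n acting on ℤ^n. Then the fixed submodule (ℤ^n)^G is zero if and only if every G-orbit O on the set {±e₁, …, ±e_n} of signed standard basis vectors satisfies O = −O. -/
open Classical

/-- For a subgroup `G` of the signed permutation group acting on `ℤ^n`, the fixed module is
zero iff every `G`-orbit on the signed standard basis vectors is symmetric. -/
theorem stmt_1 (n : ℕ) (G : Subgroup ((Fin n → ℤ) ≃ₗ[ℤ] (Fin n → ℤ)))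
    (hsp : ∀ g ∈ G, ∃ (ε : Fin n → ℤ) (σ : Equiv.Perm (Fin n)),
      (∀ i, ε i = 1 ∨ ε i = -1) ∧
      ∀ (y : Fin n → ℤ) (i : Fin n), g y i = ε i * y (σ i)) :
    (∀ y : Fin n → ℤ, (∀ g ∈ G, g y = y) → y = 0) ↔
      (∀ (i : Fin n) (s : ℤ), s = 1 ∨ s = -1 →
        ∃ g ∈ G, g (s • Pi.single i 1) = -(s • Pi.single i 1)) := by
  constructor
  · intro hfix i s hs
    by_contra hcon
    push_neg at hcon
    set v : Fin n → ℤ := s • Pi.single i 1 with hv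
    set P : (Fin n → ℤ) → Prop := fun w => ∃ g ∈ G, (g : (Fin n → ℤ) ≃ₗ[ℤ] (Fin n → ℤ)) v = w with hP
    set y : Fin n → ℤ := fun j =>
      (if P (Pi.single j 1) then (1:ℤ) else 0) - (if P (-Pi.single j 1) then (1:ℤ) else 0) with hy
    have hPiff : ∀ (h : (Fin n → ℤ) ≃ₗ[ℤ] (Fin n → ℤ)), h ∈ G → ∀ w, (P w ↔ P (h w)) := by
      intro h hh w
      constructor
      · rintro ⟨g, hg, rfl⟩
        exact ⟨h * g, G.mul_mem hh hg, rfl⟩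
      · rintro ⟨g, hg, hgv⟩
        refine ⟨h⁻¹ * g, G.mul_mem (G.inv_mem hh) hg, ?_⟩
        have e1 : (h⁻¹ * g) v = h⁻¹ (g v) := rfl
        have e2 : (h⁻¹ * h) w = h⁻¹ (h w) := rfl
        rw [e1, hgv, ← e2, inv_mul_cancel]
        rfl
    have hyfix : ∀ g ∈ G, g y = y := by
      intro h hh
      obtain ⟨ε, τ, hε, hdef⟩ := hsp h hh
      funext j
      have hbase : h (Pi.single (τ j) 1) = ε j • Pi.single j 1 := by
        funext m
        rw [hdef]
        by_cases hmj : m = j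
        · subst hmj; simp
        · have hτ : τ m ≠ τ j := fun e => hmj (τ.injective e)
          simp [Pi.single_eq_of_ne hτ, Pi.single_eq_of_ne hmj]
      have h1 : P (Pi.single (τ j) 1) ↔ P (ε j • Pi.single j 1) := by
        rw [hPiff h hh, hbase]
      have h2 : P (-Pi.single (τ j) 1) ↔ P (-(ε j • Pi.single j 1)) := by
        rw [hPiff h hh, map_neg, hbase]
      rw [hdef]
      show ε j * y (τ j) = y j
      rcases hε j with he | he
      · rw [he, one_smul] at h1 h2
        simp only [hy, h1, h2, he, one_mul]
      · rw [he, neg_smul, one_smul] at h1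
        rw [he, neg_smul, one_smul, neg_neg] at h2
        simp only [hy, h1, h2, he]
        ring
    have hy0 := hfix y hyfix
    have hPi : P v := ⟨1, G.one_mem, rfl⟩
    have hnPi : ¬ P (-v) := by
      rintro ⟨g, hg, hgv⟩
      exact hcon g hg hgv
    rcases hs with rfl | rfl
    · have hv1 : v = Pi.single i 1 := by rw [hv, one_smul]
      have : y i = 1 := by
        simp only [hy]
        rw [if_pos (hv1 ▸ hPi), if_neg (by rw [← hv1]; exact hnPi)]
        norm_num
      rw [hy0] at this
      simp at this
    · have hv1 : v = -Pi.single i 1 := by rw [hv, neg_smul, one_smul]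
      have hnv : -v = Pi.single i 1 := by rw [hv1, neg_neg]
      have : y i = -1 := by
        simp only [hy]
        rw [if_neg (by rw [← hnv]; exact hnPi), if_pos (hv1 ▸ hPi)]
        ring
      rw [hy0] at this
      simp at this
  · intro h y hy
    funext i
    obtain ⟨g, hg, hgi⟩ := h i 1 (Or.inl rfl)
    rw [one_smul] at hgi
    obtain ⟨ε, σ, hε, hdef⟩ := hsp g hg
    set j := σ.symm i with hj
    have hσj : σ j = i := σ.apply_symm_apply i
    have hcoord : ε j = -(Pi.single i 1 : Fin n → ℤ) j := by
      have := congrFun hgi j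
      rw [hdef, hσj, Pi.single_eq_same, mul_one] at this
      simpa using this
    have hji : j = i := by
      by_contra hne
      rw [Pi.single_eq_of_ne hne, neg_zero] at hcoord
      rcases hε j with he | he <;> omega
    rw [hji, Pi.single_eq_same] at hcoord
    have hσi : σ i = i := by rw [← hji, hσj, hji]
    have hfix := congrFun (hy g hg) i
    rw [hdef, hσi, hcoord] at hfix
    have h0 : y i = 0 := by linarith
    simpa using h0
end

section
/- Let w be an element of the signed permutation group {±1}^n ⋊ S_n acting on the complex torus T = (ℂ^×)^n (by permuting coordinates and inverting those with sign −1). Assume every orbit of the cyclic group ⟨w⟩ on the set {±e₁,…,±e_n} is symmetric (equal to its own negative). Then every fixed point t ∈ T of w satisfies t² = 1; in other words T^{w=1} is an elementary abelian 2-group. -/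
/-- If a signed permutation `w` acting on `(ℂ^×)^n` has only symmetric orbits on the signed
standard basis vectors, then every fixed point `t` of `w` satisfies `t² = 1`. -/
theorem stmt_2 (n : ℕ) (ε : Fin n → ℤ) (hε : ∀ i, ε i = 1 ∨ ε i = -1)
    (σ : Equiv.Perm (Fin n))
    (hsym : ∀ (i : Fin n) (s : ℤ), s = 1 ∨ s = -1 →
      ∃ k : ℕ, (fun y : Fin n → ℤ => fun j => ε j * y (σ j))^[k] (s • Pi.single i 1)
        = -(s • Pi.single i 1))
    (t : Fin n → ℂˣ) (ht : ∀ i, t (σ i) ^ (ε i) = t i) :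
    ∀ i, (t i) ^ 2 = 1 := by
  intro i
  set A : (Fin n → ℤ) → (Fin n → ℤ) := fun y : Fin n → ℤ => fun j => ε j * y (σ j) with hA
  set φ : (Fin n → ℤ) → ℂˣ := fun y => ∏ j, t j ^ y j with hφ
  -- t (σ j) = t j ^ ε j
  have hts : ∀ j, t (σ j) = t j ^ ε j := by
    intro j
    rcases hε j with h | h
    · rw [h]; simpa [h] using ht j
    · rw [h]
      have := ht j
      rw [h] at this
      simp only [zpow_neg, zpow_one] at this
      simp [← this]
  have hinv : ∀ y, φ (A y) = φ y := by
    intro y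
    calc φ (A y) = ∏ j, (t j ^ ε j) ^ y (σ j) := by
          simp only [hφ, hA]
          exact Finset.prod_congr rfl fun j _ => zpow_mul (t j) (ε j) (y (σ j))
      _ = ∏ j, t (σ j) ^ y (σ j) := by
          exact Finset.prod_congr rfl fun j _ => by rw [hts j]
      _ = ∏ j, t j ^ y j := Equiv.prod_comp σ (fun j => t j ^ y j)
  have hiter : ∀ (k : ℕ) y, φ (A^[k] y) = φ y := by
    intro k
    induction k with
    | zero => intro y; simp
    | succ m ih =>
        intro y
        rw [Function.iterate_succ_apply]
        rw [ih (A y), hinv y]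
  have hneg : ∀ y, φ (-y) = (φ y)⁻¹ := by
    intro y
    simp [hφ, ← Finset.prod_inv_distrib, zpow_neg]
  have hsingle : φ (Pi.single i 1) = t i := by
    simp only [hφ]
    rw [Finset.prod_eq_single i]
    · simp
    · intro j _ hj
      rw [Pi.single_eq_of_ne hj]
      simp
    · simp
  obtain ⟨k, hk⟩ := hsym i 1 (Or.inl rfl)
  rw [one_smul] at hk
  have key : t i = (t i)⁻¹ := by
    have h1 : φ (A^[k] (Pi.single i 1)) = t i := by rw [hiter, hsingle]
    rw [hk, hneg, hsingle] at h1
    exact h1.symm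
  rw [sq]
  nth_rewrite 2 [key]
  exact mul_inv_cancel (t i)
end

section
/- Let F be a field of characteristic not 2, K/F a separable quadratic field extension with nontrivial automorphism τ, and suppose μ_m(K) ⊂ F (every m-th root of unity in K lies in F), where the group μ_m(F) of m-th roots of unity in F is cyclic of order m. Set m₀ = m/gcd(2,m) and K¹ = {x ∈ K^× : x τ(x) = 1}. Then K¹ ∩ (K^×)^{m₀} = {±1} · (K¹)^{m₀}, i.e. an element of K¹ is an m₀-th power in K^× if and only if it is ± an m₀-th power of an element of K¹. -/
/-!
If `y ^ m₀ = x` with `N x = 1`, then `N y` is an `m₀`-torsion root of unity, hence the square of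
some power `ξ` of `ζ`; since `ξ` is fixed by `τ`, the element `y / ξ` has norm one, and
`(y / ξ) ^ m₀ = ± x` because `(ξ ^ m₀) ^ 2 = (N y) ^ m₀ = 1`. Conversely `-1` is itself an
`m₀`-th power in `K`.
-/

namespace IsPrimitiveRoot

variable {K : Type*} [Field K] {ζ : K} {m : ℕ}

theorem exists_zpow_pow_eq_of_pow_div_gcd_eq_one [NeZero m] (hζ : IsPrimitiveRoot ζ m)
    {d : ℕ} {η : K} (hη : η ^ (m / d.gcd m) = 1) : ∃ k : ℤ, (ζ ^ k) ^ d = η := by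
  set g := d.gcd m
  have hg : m / g * g = m := Nat.div_mul_cancel (Nat.gcd_dvd_right d m)
  have hmg : 0 < m / g := Nat.pos_of_ne_zero fun h ↦ NeZero.ne m (by rw [← hg, h, zero_mul])
  obtain ⟨i, -, rfl⟩ :=
    hζ.eq_pow_of_pow_eq_one (ξ := η) (by rw [← hg, pow_mul, hη, one_pow])
  have hgi : g * (m / g) ∣ i * (m / g) := by
    rw [mul_comm, hg]; exact hζ.dvd_of_pow_eq_one _ (by rwa [pow_mul])
  obtain ⟨c, rfl⟩ := Nat.dvd_of_mul_dvd_mul_right hmg hgi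
  refine ⟨d.gcdA m * c, ?_⟩
  -- Bézout: `d * gcdA d m ≡ gcd d m` modulo `m`.
  calc (ζ ^ (d.gcdA m * c)) ^ d = ζ ^ ((g * c : ℕ) : ℤ) * (ζ ^ m) ^ (-(d.gcdB m * c)) := by
        rw [← zpow_natCast, ← zpow_mul, ← zpow_natCast ζ m, ← zpow_mul,
          ← zpow_add₀ (hζ.ne_zero (NeZero.ne m))]
        congr 1
        push_cast
        linear_combination (-(c : ℤ)) * Nat.gcd_eq_gcd_ab d m
    _ = ζ ^ (g * c) := by rw [hζ.pow_eq_one, one_zpow, mul_one, zpow_natCast]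

theorem exists_pow_div_gcd_two_eq_neg_one [NeZero m] (hζ : IsPrimitiveRoot ζ m) :
    ∃ w : K, w ^ (m / Nat.gcd 2 m) = -1 := by
  rcases Nat.even_or_odd m with hm | hm
  · obtain ⟨k, rfl⟩ := hm.two_dvd
    have hk : 0 < k := Nat.pos_of_mul_pos_left (NeZero.pos (2 * k))
    have h2 : IsPrimitiveRoot (ζ ^ k) 2 := by
      simpa [hk.ne'] using hζ.pow_of_dvd hk.ne' (dvd_mul_left k 2)
    refine ⟨ζ, ?_⟩
    rw [Nat.gcd_mul_right_right, Nat.mul_div_cancel_left k two_pos, h2.eq_neg_one_of_two_right]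
  · exact ⟨-1, by rw [hm.coprime_two_left, Nat.div_one, hm.neg_one_pow]⟩

end IsPrimitiveRoot

theorem stmt_4_general (K : Type*) [Field K]
    (τ : K ≃+* K) (m : ℕ) (hm : 1 ≤ m)
    (ζ : K) (hζfix : τ ζ = ζ) (hζ : IsPrimitiveRoot ζ m) :
    ∀ x : K, x * τ x = 1 →
      ((∃ y : K, y ^ (m / Nat.gcd 2 m) = x) ↔
        ∃ z : K, z * τ z = 1 ∧
          (x = z ^ (m / Nat.gcd 2 m) ∨ x = -(z ^ (m / Nat.gcd 2 m)))) := by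
  have : NeZero m := ⟨by omega⟩
  intro x hx
  constructor
  · rintro ⟨y, rfl⟩
    have hNy : (y * τ y) ^ (m / Nat.gcd 2 m) = 1 := by rwa [mul_pow, ← map_pow]
    obtain ⟨k, hξsq⟩ := hζ.exists_zpow_pow_eq_of_pow_div_gcd_eq_one hNy
    have hξ₀ : ζ ^ k ≠ 0 := zpow_ne_zero k (hζ.ne_zero (NeZero.ne m))
    have hτξ : τ (ζ ^ k) = ζ ^ k := by rw [map_zpow₀, hζfix]
    have hξpow : (ζ ^ k) ^ (m / Nat.gcd 2 m) = 1 ∨ (ζ ^ k) ^ (m / Nat.gcd 2 m) = -1 :=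
      sq_eq_one_iff.mp (by rw [← pow_mul, mul_comm, pow_mul, hξsq, hNy])
    refine ⟨y / ζ ^ k, ?_, ?_⟩
    · rw [map_div₀, hτξ, div_mul_div_comm, ← sq, ← hξsq, div_self (pow_ne_zero 2 hξ₀)]
    · rcases hξpow with h | h
      · left; rw [div_pow, h, div_one]
      · right; rw [div_pow, h, div_neg, div_one, neg_neg]
  · obtain ⟨w, hw⟩ := hζ.exists_pow_div_gcd_two_eq_neg_one
    rintro ⟨z, -, rfl | rfl⟩
    · exact ⟨z, rfl⟩
    · exact ⟨w * z, by rw [mul_pow, hw, neg_one_mul]⟩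

/-- `K¹ ∩ (K^×)^{m₀} = {±1}·(K¹)^{m₀}` for a quadratic field extension `K/F` with
`μ_m(K) ⊆ F` and `μ_m(F)` cyclic of order `m`. -/
theorem stmt_4 (K : Type*) [Field K] (h2 : (2 : K) ≠ 0)
    (τ : K ≃+* K) (hinv : ∀ x, τ (τ x) = x) (hne : ∃ x, τ x ≠ x)
    (m : ℕ) (hm : 1 ≤ m)
    (hμ : ∀ x : K, x ^ m = 1 → τ x = x)
    (ζ : K) (hζfix : τ ζ = ζ) (hζ : IsPrimitiveRoot ζ m) :
    ∀ x : K, x * τ x = 1 →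
      ((∃ y : K, y ^ (m / Nat.gcd 2 m) = x) ↔
        ∃ z : K, z * τ z = 1 ∧
          (x = z ^ (m / Nat.gcd 2 m) ∨ x = -(z ^ (m / Nat.gcd 2 m)))) :=
  stmt_4_general K τ m hm ζ hζfix hζ
end

section
/- Let F be a field with char F ≠ 2 and γ = [[a,b],[c,d]] ∈ SL₂(F) with c ≠ 0. Equip W = F² with the symplectic form ⟨(r,s)|(r',s')⟩ = rs' − r's and W^□ = W ⊕ W with the form (−⟨·|·⟩) ⊕ ⟨·|·⟩. Let ℓ = F·(1,0) ⊂ W, ℓ₁ = ℓ ⊕ ℓ ⊂ W^□, and Γ_{−γ} = {(w, −γw) : w ∈ W} ⊂ W^□. Then W^□ = ℓ₁ ⊕ Γ_{−γ}, and for every v = (α,β;α,β) in the diagonal Γ₁, writing v = v₁ + v₃ with v₁ ∈ ℓ₁, v₃ ∈ Γ_{−γ}, one has ⟨v₁ | v₃⟩_{W^□} = −(2 + a + d)·β²/c. -/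
/-!
Since `c ≠ 0`, the last coordinate `y₂ = -(c t + d u)` of `v = (r,0;s,0) + (t,u;-γ(t,u))`
determines `t`, and then every other coordinate is forced, which gives `W^□ = ℓ₁ ⊕ Γ_{−γ}`.
For a diagonal vector `(α,β;α,β)` one gets `u = β` and `c t + d u = -β`, so the cross pairing is
`β (s - r) = β ((1 + a) t + b β)`; substituting `t = -(1 + d) β / c` and `ad - bc = 1` yields
`-(2 + a + d) β² / c`.
-/

section

variable {F : Type*} [Field F]

def symplecticForm (p q : F × F) : F := p.1 * q.2 - p.2 * q.1

def boxForm (v w : (F × F) × (F × F)) : F :=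
  -symplecticForm v.1 w.1 + symplecticForm v.2 w.2

/-- The vector `(r,0;s,0) ∈ ℓ₁ = ℓ ⊕ ℓ` for `x = (r, s)`. -/
def lineSumEmb (x : F × F) : (F × F) × (F × F) := ((x.1, 0), (x.2, 0))

/-- The vector `(w, -γw) ∈ Γ_{−γ}` for `γ = [[a,b],[c,d]]`. -/
def negGraphEmb (a b c d : F) (w : F × F) : (F × F) × (F × F) :=
  (w, (-(a * w.1 + b * w.2), -(c * w.1 + d * w.2)))

/-- The coordinates `((r, s), (t, u))` of `v` in `ℓ₁ ⊕ Γ_{−γ}`; meaningful only for `c ≠ 0`. -/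
def lagrangianCoords (a b c d : F) (v : (F × F) × (F × F)) : (F × F) × (F × F) :=
  let t := -(v.2.2 + d * v.1.2) / c
  ((v.1.1 - t, v.2.1 + a * t + b * v.1.2), (t, v.1.2))

theorem eq_lineSumEmb_add_negGraphEmb_iff {a b c d : F} (hc : c ≠ 0)
    (v x : (F × F) × (F × F)) :
    v = lineSumEmb x.1 + negGraphEmb a b c d x.2 ↔ x = lagrangianCoords a b c d v := by
  obtain ⟨⟨x₁, x₂⟩, y₁, y₂⟩ := v
  obtain ⟨⟨r, s⟩, t, u⟩ := x
  simp only [lineSumEmb, negGraphEmb, lagrangianCoords, Prod.mk_add_mk, Prod.mk.injEq, zero_add]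
  constructor
  · rintro ⟨⟨rfl, rfl⟩, rfl, rfl⟩
    have ht : -(-(c * t + d * x₂) + d * x₂) / c = t := by field_simp; ring
    rw [ht]
    exact ⟨⟨by ring, by ring⟩, rfl, rfl⟩
  · rintro ⟨⟨rfl, rfl⟩, rfl, rfl⟩
    refine ⟨⟨by ring, rfl⟩, by ring, ?_⟩
    field_simp
    ring

theorem boxForm_lineSumEmb_negGraphEmb (a b c d : F) (x w : F × F) :
    boxForm (lineSumEmb x) (negGraphEmb a b c d w) = -(x.1 * w.2 + x.2 * (c * w.1 + d * w.2)) := by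
  simp only [boxForm, symplecticForm, lineSumEmb, negGraphEmb]
  ring

def componentPairing (a b c d : F) (v : (F × F) × (F × F)) : F :=
  boxForm (lineSumEmb (lagrangianCoords a b c d v).1)
    (negGraphEmb a b c d (lagrangianCoords a b c d v).2)

theorem componentPairing_diag {a b c d : F} (hdet : a * d - b * c = 1) (hc : c ≠ 0) (α β : F) :
    componentPairing a b c d ((α, β), (α, β)) = -(2 + a + d) * β ^ 2 / c := by
  simp only [componentPairing, boxForm_lineSumEmb_negGraphEmb, lagrangianCoords]
  field_simp
  linear_combination -β ^ 2 * hdet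

end

theorem stmt_15_general (F : Type*) [Field F]
    (a b c d : F) (hdet : a * d - b * c = 1) (hc : c ≠ 0) :
    ∀ sy : (F × F) → (F × F) → F,
      (∀ p q : F × F, sy p q = p.1 * q.2 - p.2 * q.1) →
      ∀ Ω : ((F × F) × (F × F)) → ((F × F) × (F × F)) → F,
        (∀ v w : (F × F) × (F × F), Ω v w = -(sy v.1 w.1) + sy v.2 w.2) →
        ((∀ v : (F × F) × (F × F),
            ∃! rstu : (F × F) × (F × F),
              v = ((rstu.1.1, 0), (rstu.1.2, 0)) +
                  (rstu.2, (-(a * rstu.2.1 + b * rstu.2.2),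
                            -(c * rstu.2.1 + d * rstu.2.2)))) ∧
         (∀ α β r s t u : F,
            ((α, β), (α, β)) =
              (((r, 0), (s, 0)) : (F × F) × (F × F)) +
                ((t, u), (-(a * t + b * u), -(c * t + d * u))) →
            Ω ((r, 0), (s, 0)) ((t, u), (-(a * t + b * u), -(c * t + d * u)))
              = -(2 + a + d) * β ^ 2 / c)) := by
  intro sy hsy Ω hΩ
  obtain rfl : sy = symplecticForm := funext₂ hsy
  obtain rfl : Ω = boxForm := funext₂ hΩ
  refine ⟨fun v => ⟨lagrangianCoords a b c d v,
      (eq_lineSumEmb_add_negGraphEmb_iff hc v _).2 rfl,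
      fun x hx => (eq_lineSumEmb_add_negGraphEmb_iff hc v x).1 hx⟩, ?_⟩
  intro α β r s t u h
  have hcoords := (eq_lineSumEmb_add_negGraphEmb_iff hc _ ((r, s), (t, u))).1 h
  rw [← componentPairing_diag hdet hc α β, componentPairing, ← hcoords]
  rfl

/-- `W^□ = ℓ₁ ⊕ Γ_{−γ}` for `γ ∈ SL₂(F)` with `c ≠ 0`, and the cross pairing of the two
components of a diagonal vector `(α,β;α,β)` equals `−(2+a+d)β²/c`. -/
theorem stmt_15 (F : Type*) [Field F] (h2 : (2 : F) ≠ 0)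
    (a b c d : F) (hdet : a * d - b * c = 1) (hc : c ≠ 0) :
    ∀ sy : (F × F) → (F × F) → F,
      (∀ p q : F × F, sy p q = p.1 * q.2 - p.2 * q.1) →
      ∀ Ω : ((F × F) × (F × F)) → ((F × F) × (F × F)) → F,
        (∀ v w : (F × F) × (F × F), Ω v w = -(sy v.1 w.1) + sy v.2 w.2) →
        ((∀ v : (F × F) × (F × F),
            ∃! rstu : (F × F) × (F × F),
              v = ((rstu.1.1, 0), (rstu.1.2, 0)) +
                  (rstu.2, (-(a * rstu.2.1 + b * rstu.2.2),
                            -(c * rstu.2.1 + d * rstu.2.2)))) ∧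
         (∀ α β r s t u : F,
            ((α, β), (α, β)) =
              (((r, 0), (s, 0)) : (F × F) × (F × F)) +
                ((t, u), (-(a * t + b * u), -(c * t + d * u))) →
            Ω ((r, 0), (s, 0)) ((t, u), (-(a * t + b * u), -(c * t + d * u)))
              = -(2 + a + d) * β ^ 2 / c)) :=
  stmt_15_general F a b c d hdet hc
end

section
/- Let E be a Hausdorff topological group, A ⊂ E a finite central subgroup of order m, p a prime with p ∤ m, and suppose x, x' ∈ E both satisfy lim_{k→∞} x^{p^k} = 1 (topological unipotence) and x' = a·x for some a ∈ A. Then a = 1, i.e. x' = x. Moreover, if x is topologically unipotent and g ∈ E commutes with the image of x in E/A (i.e. [g, x] ∈ A), then [g, x] = 1. -/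
/-!
Multiplying a topologically unipotent `x` by a central `a` gives `(a * x) ^ n = a ^ n * x ^ n`,
so if `a * x` is topologically unipotent as well then `a ^ (p ^ k) → 1`. Since `A \ {1}` is
finite, hence closed, this forces `a ^ (p ^ k) = 1` for large `k`, and as `p ^ k` is prime to
`|A|`, `a = 1`. The commutator statement is the special case `x' = g x g⁻¹ = [g, x] x`,
which is topologically unipotent because conjugation is continuous.
-/

open Filter Topology

theorem Set.Finite.eventually_eq_of_tendsto {X ι : Type*} [TopologicalSpace X] [T1Space X]
    {s : Set X} (hs : s.Finite) {u : ι → X} {l : Filter ι} {b : X} (hu : ∀ i, u i ∈ s)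
    (h : Tendsto u l (𝓝 b)) : ∀ᶠ i in l, u i = b := by
  have hnhds : (s \ {b})ᶜ ∈ 𝓝 b :=
    (hs.subset Set.sdiff_subset).isClosed.isOpen_compl.mem_nhds (by simp)
  filter_upwards [h hnhds] with i hi
  by_contra hne
  exact hi ⟨hu i, hne⟩

theorem Subgroup.eq_one_of_tendsto_pow_pow {E : Type*} [Group E] [TopologicalSpace E]
    [T1Space E] (A : Subgroup E) [Finite A] {p : ℕ} (hp : p.Coprime (Nat.card A)) {a : E}
    (ha : a ∈ A) (h : Tendsto (fun k : ℕ => a ^ (p ^ k)) atTop (𝓝 1)) : a = 1 := by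
  obtain ⟨k, hk⟩ :=
    ((Set.toFinite (A : Set E)).eventually_eq_of_tendsto (fun k => A.pow_mem ha _) h).exists
  have hcard : a ^ Nat.card A = 1 := by
    simpa only [Subgroup.coe_pow, Subgroup.coe_one] using
      congrArg Subtype.val (pow_card_eq_one' (x := (⟨a, ha⟩ : A)))
  exact (pow_eq_one_iff_of_coprime (hp.pow_left k)).1 ⟨hk, hcard⟩

theorem Commute.tendsto_pow_of_tendsto_mul_pow {E ι : Type*} [Group E] [TopologicalSpace E]
    [IsTopologicalGroup E] {a x : E} (hax : Commute a x) {n : ι → ℕ} {l : Filter ι}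
    (hx : Tendsto (fun i => x ^ n i) l (𝓝 1))
    (hmul : Tendsto (fun i => (a * x) ^ n i) l (𝓝 1)) :
    Tendsto (fun i => a ^ n i) l (𝓝 1) := by
  simpa [hax.mul_pow] using hmul.mul hx.inv

theorem Filter.Tendsto.conj_pow {E ι : Type*} [Group E] [TopologicalSpace E]
    [IsTopologicalGroup E] (g : E) {x : E} {n : ι → ℕ} {l : Filter ι}
    (hx : Tendsto (fun i => x ^ n i) l (𝓝 1)) :
    Tendsto (fun i => (g * x * g⁻¹) ^ n i) l (𝓝 1) := by
  simpa [conj_pow] using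
    ((tendsto_const_nhds (x := g)).mul hx).mul (tendsto_const_nhds (x := g⁻¹))

/-- Uniqueness of topologically unipotent lifts modulo a finite central subgroup of order
prime to `p`, and triviality of central commutators with topologically unipotent elements. -/
theorem stmt_18 {E : Type*} [Group E] [TopologicalSpace E] [IsTopologicalGroup E] [T2Space E]
    (A : Subgroup E) (hA : A ≤ Subgroup.center E) [Finite A]
    (m : ℕ) (hm : Nat.card A = m)
    (p : ℕ) (hp : p.Prime) (hpm : ¬ p ∣ m) :
    (∀ x x' : E,
      Filter.Tendsto (fun k : ℕ => x ^ (p ^ k)) Filter.atTop (nhds 1) →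
      Filter.Tendsto (fun k : ℕ => x' ^ (p ^ k)) Filter.atTop (nhds 1) →
      ∀ a ∈ A, x' = a * x → a = 1) ∧
    (∀ x g : E,
      Filter.Tendsto (fun k : ℕ => x ^ (p ^ k)) Filter.atTop (nhds 1) →
      g * x * g⁻¹ * x⁻¹ ∈ A → g * x * g⁻¹ * x⁻¹ = 1) := by
  have hcop : p.Coprime (Nat.card A) := hm ▸ hp.coprime_iff_not_dvd.2 hpm
  have lift_unique : ∀ x x' : E, Tendsto (fun k : ℕ => x ^ (p ^ k)) atTop (𝓝 1) →
      Tendsto (fun k : ℕ => x' ^ (p ^ k)) atTop (𝓝 1) → ∀ a ∈ A, x' = a * x → a = 1 := by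
    rintro x x' hx hx' a ha rfl
    have hax : Commute a x := (Subgroup.mem_center_iff.1 (hA ha) x).symm
    exact A.eq_one_of_tendsto_pow_pow hcop ha (hax.tendsto_pow_of_tendsto_mul_pow hx hx')
  refine ⟨lift_unique, fun x g hx hc => ?_⟩
  exact lift_unique x (g * x * g⁻¹) hx (hx.conj_pow g) _ hc (by group)
end

section
/- Let F be a field of characteristic not 2, K a quadratic étale F-algebra with involution τ (so either K is a quadratic field extension or K ≅ F × F with τ swapping coordinates), and m a positive even integer. Set m₀ = m/gcd(2,m) = m/2 and K¹ = {x ∈ K^× : xτ(x) = 1}. If 4 ∤ m (so m₀ is odd) or K ≅ F × F and F contains a primitive m-th root of unity, then −1 ∈ (K¹)^{m₀}, hence (K¹)^{m₀} = (−1)·(K¹)^{m₀}. If 4 ∣ m, K is a field, and all m-th roots of unity of K lie in F, then −1 ∉ (K¹)^{m₀}, hence (K¹)^{m₀} ∩ (−1)·(K¹)^{m₀} = ∅. -/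
/-!
Write `K¹` for the norm-one elements `z * τ z = 1`. Multiplying by some `ξ ∈ K¹` with `ξ ^ m₀ = -1`
interchanges `(K¹)^{m₀}` and `-(K¹)^{m₀}`; such a `ξ` is `-1` when `m₀` is odd, and `(ζ, ζ⁻¹)` for
`K = F × F` and a primitive `m`-th root of unity `ζ ∈ F`. Conversely, a common element `z₁ ^ m₀ = -z₂ ^ m₀`
produces `ξ = z₁ * τ z₂ ∈ K¹` with `ξ ^ m₀ = -1`. When `4 ∣ m` and the `m`-th roots of unity of the
field `K` are fixed by `τ`, this `ξ` satisfies `ξ² = ξ * τ ξ = 1`, so `ξ = ±1` and `ξ ^ m₀ = 1 ≠ -1`.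
-/

section NormOne

variable {K G : Type*} [CommMonoid K] [HasDistribNeg K] [FunLike G K K] [MonoidHomClass G K K]

theorem exists_norm_one_pow_eq_iff_exists_norm_one_neg_pow_eq (σ : G) {n : ℕ} {ξ : K}
    (hξ : ξ * σ ξ = 1) (hξn : ξ ^ n = -1) (x : K) :
    (∃ z : K, z * σ z = 1 ∧ z ^ n = x) ↔ (∃ z : K, z * σ z = 1 ∧ -(z ^ n) = x) := by
  have norm_mul_ξ {z : K} (hz : z * σ z = 1) : z * ξ * σ (z * ξ) = 1 := by
    rw [map_mul, mul_mul_mul_comm, hz, hξ, one_mul]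
  have pow_mul_ξ (z : K) : (z * ξ) ^ n = -(z ^ n) := by
    rw [mul_pow, hξn, mul_neg_one]
  constructor
  · rintro ⟨z, hz, rfl⟩
    exact ⟨z * ξ, norm_mul_ξ hz, by rw [pow_mul_ξ, neg_neg]⟩
  · rintro ⟨z, hz, rfl⟩
    exact ⟨z * ξ, norm_mul_ξ hz, pow_mul_ξ z⟩

theorem exists_norm_one_pow_eq_neg_one_of_pow_eq_neg_pow {σ : G} (hσ : Function.Involutive σ)
    {n : ℕ} {z₁ z₂ : K} (hz₁ : z₁ * σ z₁ = 1) (hz₂ : z₂ * σ z₂ = 1) (h : z₁ ^ n = -(z₂ ^ n)) :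
    ∃ ξ : K, ξ * σ ξ = 1 ∧ ξ ^ n = -1 := by
  refine ⟨z₁ * σ z₂, ?_, ?_⟩
  · rw [map_mul, hσ z₂, mul_mul_mul_comm, hz₁, mul_comm (σ z₂), hz₂, one_mul]
  · rw [mul_pow, h, neg_mul, ← mul_pow, hz₂, one_pow]

end NormOne

theorem IsPrimitiveRoot.pow_div_two_eq_neg_one {R : Type*} [CommRing R] [NoZeroDivisors R]
    {ζ : R} {m : ℕ} (hζ : IsPrimitiveRoot ζ m) (hm : 0 < m) (hme : 2 ∣ m) : ζ ^ (m / 2) = -1 :=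
  (hζ.pow hm (Nat.div_mul_cancel hme).symm).eq_neg_one_of_two_right

theorem not_exists_norm_one_pow_div_two_eq_neg_one {K G : Type*} [CommRing K] [NoZeroDivisors K]
    [FunLike G K K] (σ : G) {m : ℕ} (h4 : 4 ∣ m) (hfix : ∀ x : K, x ^ m = 1 → σ x = x)
    (h2 : (2 : K) ≠ 0) : ¬ ∃ ξ : K, ξ * σ ξ = 1 ∧ ξ ^ (m / 2) = -1 := by
  rintro ⟨ξ, hξ, hξn⟩
  have heven : Even (m / 2) := Nat.even_iff.mpr (by omega)
  have hξm : ξ ^ m = 1 := by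
    rw [← Nat.div_mul_cancel (dvd_trans (by norm_num : 2 ∣ 4) h4), pow_mul, hξn, neg_one_sq]
  rw [hfix ξ hξm] at hξ
  have hξ_pow : ξ ^ (m / 2) = 1 := by
    rcases mul_self_eq_one_iff.mp hξ with rfl | rfl
    · exact one_pow _
    · exact heven.neg_one_pow
  exact h2 (by linear_combination hξn - hξ_pow)

/-- For a quadratic étale algebra `K` with involution `τ`, norm-one group `K¹` and
`m₀ = m/2` (`m` even): `(K¹)^{m₀} = (−1)·(K¹)^{m₀}` if `4 ∤ m`, or if `K ≅ F × F` and `F`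
has a primitive `m`-th root of unity; whereas `(K¹)^{m₀} ∩ (−1)·(K¹)^{m₀} = ∅` if `4 ∣ m`,
`K` is a field and all `m`-th roots of unity of `K` lie in `F`. -/
theorem stmt_19 (m : ℕ) (hm : 0 < m) (hme : 2 ∣ m) :
    ((¬ 4 ∣ m) → ∀ (K : Type*) [CommRing K] (τ : K ≃+* K), (∀ x, τ (τ x) = x) →
      ∀ x : K, (∃ z : K, z * τ z = 1 ∧ z ^ (m / 2) = x) ↔
        (∃ z : K, z * τ z = 1 ∧ -(z ^ (m / 2)) = x)) ∧
    (∀ (F : Type*) [Field F] (ζ : F), IsPrimitiveRoot ζ m →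
      ∀ x : F × F,
        (∃ z : F × F, z * (z.2, z.1) = 1 ∧ z ^ (m / 2) = x) ↔
        (∃ z : F × F, z * (z.2, z.1) = 1 ∧ -(z ^ (m / 2)) = x)) ∧
    ((4 ∣ m) → ∀ (K : Type*) [Field K] (τ : K ≃+* K), (∀ x, τ (τ x) = x) →
      (2 : K) ≠ 0 → (∀ x : K, x ^ m = 1 → τ x = x) →
      ∀ x : K, ¬ ((∃ z : K, z * τ z = 1 ∧ z ^ (m / 2) = x) ∧
        (∃ z : K, z * τ z = 1 ∧ -(z ^ (m / 2)) = x))) := by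
  refine ⟨fun h4 K _ τ _ ↦ ?_, fun F _ ζ hζ ↦ ?_, fun h4 K _ τ hτ h2 hfix x ↦ ?_⟩
  · have hodd : Odd (m / 2) := Nat.odd_iff.mpr (by omega)
    exact exists_norm_one_pow_eq_iff_exists_norm_one_neg_pow_eq τ (by simp) hodd.neg_one_pow
  · have hξn : ((ζ, ζ⁻¹) : F × F) ^ (m / 2) = -1 := by
      rw [Prod.pow_mk, hζ.pow_div_two_eq_neg_one hm hme, hζ.inv.pow_div_two_eq_neg_one hm hme]
      rfl
    exact exists_norm_one_pow_eq_iff_exists_norm_one_neg_pow_eq (MulEquiv.prodComm : F × F ≃* F × F)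
      (by simp [hζ.ne_zero hm.ne']) hξn
  · rintro ⟨⟨z₁, hz₁, rfl⟩, ⟨z₂, hz₂, h⟩⟩
    exact not_exists_norm_one_pow_div_two_eq_neg_one τ h4 hfix h2
      (exists_norm_one_pow_eq_neg_one_of_pow_eq_neg_pow hτ hz₁ hz₂ h.symm)
end
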